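/- Let μ_n ⇒ μ be centred measures with E[|X_{μ_n}|] → E[|X_μ|], and suppose μ has no atom at x ∈ (infimum of support, 0). If P_n → P and P_n', P' denote put functions and their derivatives, and a_n⁺(x), a⁺(x) are the unique solutions z of P_n(x) + P_n'(x)(z - x) = C_n(z) and P(x) + P'(x)(z-x) = C(z) respectively, then a_n⁺(x) → a⁺(x). -/

import Mathlib

/-!
Write `P`, `C` for the put and call prices and `G(z) = P(x) + P'(x)(z - x) - C(z)` for the gap
between the tangent to `P` at `x` and `C`. Centring gives put–call parity `C(t) = P(t) - t` and
`2 P(t) = E|X - t| + t`; since `|y - t| - |y|` is bounded and continuous, weak convergence together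
with `E|X_n| → E|X|` yields `P_n → P` pointwise. The `P_n` are convex, so their chord slopes squeeze
`P_n'(x) → P'(x)`, and hence `G_n → G` pointwise. Mass below `x` makes `P'(x) > 0`, so `G` tends
to `±∞` at `±∞`; as `a⁺(x)` is its only zero, `G` changes sign there, and the intermediate value
theorem traps the unique zero `a_n⁺(x)` of `G_n` near `a⁺(x)` for large `n`.
-/

open MeasureTheory Set Filter Topology

noncomputable def putPrice (ν : Measure ℝ) (t : ℝ) : ℝ := ∫ y, max (t - y) 0 ∂ν

noncomputable def callPrice (ν : Measure ℝ) (t : ℝ) : ℝ := ∫ y, max (y - t) 0 ∂ν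

noncomputable def tangentGap (ν : Measure ℝ) (x d z : ℝ) : ℝ :=
  putPrice ν x + d * (z - x) - callPrice ν z

section Prices

variable {ν : Measure ℝ}

lemma integrable_putPayoff [IsFiniteMeasure ν] (h : Integrable id ν) (t : ℝ) :
    Integrable (fun y => max (t - y) 0) ν :=
  ((integrable_const t).sub h).pos_part

lemma integrable_callPayoff [IsFiniteMeasure ν] (h : Integrable id ν) (t : ℝ) :
    Integrable (fun y => max (y - t) 0) ν :=
  (h.sub (integrable_const t)).pos_part

lemma putPrice_add_callPrice [IsFiniteMeasure ν] (h : Integrable id ν) (t : ℝ) :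
    putPrice ν t + callPrice ν t = ∫ y, |y - t| ∂ν := by
  rw [putPrice, callPrice, ← integral_add (integrable_putPayoff h t) (integrable_callPayoff h t)]
  congr 1 with y
  rcases le_total y t with hy | hy
  · rw [max_eq_left (by linarith), max_eq_right (by linarith), abs_of_nonpos (by linarith)]
    ring
  · rw [max_eq_right (by linarith), max_eq_left (by linarith), abs_of_nonneg (by linarith)]
    ring

lemma callPrice_eq_putPrice_sub [IsProbabilityMeasure ν] (h : Integrable id ν)
    (hc : ∫ y, y ∂ν = 0) (t : ℝ) : callPrice ν t = putPrice ν t - t := by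
  have hpayoff : ∀ y, max (y - t) 0 - max (t - y) 0 = y - t := fun y => by
    rcases le_total y t with hy | hy
    · rw [max_eq_right (by linarith), max_eq_left (by linarith)]; ring
    · rw [max_eq_left (by linarith), max_eq_right (by linarith)]; ring
  have hmean : ∫ y, max (y - t) 0 - max (t - y) 0 ∂ν = -t := by
    simp_rw [hpayoff]
    rw [integral_sub (f := fun y => y) h (integrable_const t), hc]
    simp
  rw [integral_sub (integrable_callPayoff h t) (integrable_putPayoff h t)] at hmean
  rw [callPrice, putPrice]
  linarith

lemma two_mul_putPrice [IsProbabilityMeasure ν] (h : Integrable id ν) (hc : ∫ y, y ∂ν = 0)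
    (t : ℝ) : 2 * putPrice ν t = ∫ y, |y - t| ∂ν + t := by
  rw [← putPrice_add_callPrice h, callPrice_eq_putPrice_sub h hc]
  ring

lemma putPrice_nonneg (t : ℝ) : 0 ≤ putPrice ν t :=
  integral_nonneg fun _ => le_max_right _ _

lemma callPrice_le_integral_abs [IsFiniteMeasure ν] (h : Integrable id ν) {t : ℝ}
    (ht : 0 ≤ t) : callPrice ν t ≤ ∫ y, |y| ∂ν :=
  integral_mono (integrable_callPayoff h t) h.abs fun y =>
    max_le (by linarith [le_abs_self y]) (abs_nonneg y)

lemma convexOn_putPrice [IsFiniteMeasure ν] (h : Integrable id ν) :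
    ConvexOn ℝ univ (putPrice ν) := by
  refine ⟨convex_univ, fun s _ t _ a b ha hb hab => ?_⟩
  have hpayoff : ∀ y : ℝ,
      max (a • s + b • t - y) 0 ≤ a * max (s - y) 0 + b * max (t - y) 0 := fun y => by
    refine max_le ?_ (by positivity)
    have : a • s + b • t - y = a * (s - y) + b * (t - y) := by
      simp only [smul_eq_mul]; linear_combination y * hab
    rw [this]
    gcongr <;> exact le_max_left _ _
  have hs := (integrable_putPayoff h s).const_mul a
  have ht := (integrable_putPayoff h t).const_mul b
  calc putPrice ν (a • s + b • t)
      ≤ ∫ y, a * max (s - y) 0 + b * max (t - y) 0 ∂ν :=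
        integral_mono (integrable_putPayoff h _) (hs.add ht) hpayoff
    _ = a • putPrice ν s + b • putPrice ν t := by
        rw [integral_add hs ht, integral_const_mul, integral_const_mul]; rfl

lemma continuous_putPrice [IsFiniteMeasure ν] (h : Integrable id ν) : Continuous (putPrice ν) :=
  continuousOn_univ.1 ((convexOn_putPrice h).continuousOn isOpen_univ)

lemma pos_of_hasDerivAt_putPrice [IsFiniteMeasure ν] (h : Integrable id ν) {x d : ℝ}
    (hx : 0 < ν (Iio x)) (hd : HasDerivAt (putPrice ν) d x) : 0 < d := by
  have hslope := (convexOn_putPrice h).slope_le_of_hasDerivAt (mem_univ (x - 1)) (mem_univ x)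
    (by linarith) hd
  rw [slope_def_field, sub_sub_cancel, div_one, putPrice, putPrice,
    ← integral_sub (integrable_putPayoff h x) (integrable_putPayoff h (x - 1))] at hslope
  refine lt_of_lt_of_le ?_ hslope
  refine (integral_pos_iff_support_of_nonneg (fun y => ?_)
    ((integrable_putPayoff h x).sub (integrable_putPayoff h (x - 1)))).2
    (hx.trans_le (measure_mono fun y hy => ?_))
  · exact sub_nonneg.2 (max_le_max (by linarith) le_rfl)
  · rw [mem_Iio] at hy
    rw [Function.mem_support, Pi.sub_apply, max_eq_left (by linarith)]
    exact sub_ne_zero.2 (ne_of_gt (max_lt (by linarith) (by linarith)))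

end Prices

section Convergence

variable {ι : Type*} {l : Filter ι} {μs : ι → Measure ℝ} {μ : Measure ℝ}

lemma tendsto_integral_abs_sub [∀ i, IsFiniteMeasure (μs i)] [IsFiniteMeasure μ]
    (hints : ∀ i, Integrable id (μs i)) (hint : Integrable id μ)
    (hweak : ∀ f : BoundedContinuousFunction ℝ ℝ,
      Tendsto (fun i => ∫ y, f y ∂μs i) l (𝓝 (∫ y, f y ∂μ)))
    (habs : Tendsto (fun i => ∫ y, |y| ∂μs i) l (𝓝 (∫ y, |y| ∂μ))) (t : ℝ) :
    Tendsto (fun i => ∫ y, |y - t| ∂μs i) l (𝓝 (∫ y, |y - t| ∂μ)) := by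
  let g : BoundedContinuousFunction ℝ ℝ :=
    .ofNormedAddCommGroup (fun y => |y - t| - |y|)
      ((continuous_id.sub continuous_const).abs.sub continuous_abs) |t| fun y => by
        simpa using abs_abs_sub_abs_le_abs_sub (y - t) y
  have hsplit : ∀ (ν : Measure ℝ) [IsFiniteMeasure ν], Integrable id ν →
      ∫ y, |y - t| ∂ν = ∫ y, |y| ∂ν + ∫ y, g y ∂ν := fun ν _ h => by
    rw [← integral_add (f := fun y => |y|) h.abs (g.integrable ν)]
    congr 1 with y
    simp [g]
  simp_rw [hsplit _ (hints _), hsplit μ hint]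
  exact habs.add (hweak g)

lemma tendsto_putPrice [∀ i, IsProbabilityMeasure (μs i)] [IsProbabilityMeasure μ]
    (hints : ∀ i, Integrable id (μs i)) (hcents : ∀ i, ∫ y, y ∂μs i = 0)
    (hint : Integrable id μ) (hcent : ∫ y, y ∂μ = 0)
    (hweak : ∀ f : BoundedContinuousFunction ℝ ℝ,
      Tendsto (fun i => ∫ y, f y ∂μs i) l (𝓝 (∫ y, f y ∂μ)))
    (habs : Tendsto (fun i => ∫ y, |y| ∂μs i) l (𝓝 (∫ y, |y| ∂μ))) (t : ℝ) :
    Tendsto (fun i => putPrice (μs i) t) l (𝓝 (putPrice μ t)) := by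
  have hput : ∀ (ν : Measure ℝ) [IsProbabilityMeasure ν], Integrable id ν → ∫ y, y ∂ν = 0 →
      putPrice ν t = (∫ y, |y - t| ∂ν + t) / 2 := fun ν _ h hc => by
    linarith [two_mul_putPrice h hc t]
  simp_rw [hput _ (hints _) (hcents _), hput μ hint hcent]
  exact ((tendsto_integral_abs_sub hints hint hweak habs t).add_const t).div_const 2

end Convergence

lemma tendsto_of_convexOn_of_hasDerivAt {ι : Type*} {l : Filter ι} {f : ι → ℝ → ℝ}
    {g : ℝ → ℝ} {d : ι → ℝ} {D x : ℝ} (hf : ∀ i, ConvexOn ℝ univ (f i))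
    (hfg : ∀ t, Tendsto (fun i => f i t) l (𝓝 (g t))) (hd : ∀ i, HasDerivAt (f i) (d i) x)
    (hD : HasDerivAt g D x) : Tendsto d l (𝓝 D) := by
  have hslope : ∀ z, Tendsto (fun i => slope (f i) x z) l (𝓝 (slope g x z)) := fun z => by
    simp only [slope_def_field]
    exact ((hfg z).sub (hfg x)).div_const _
  obtain ⟨hleft, hright⟩ := hasDerivAt_iff_tendsto_slope_left_right.1 hD
  refine tendsto_order.2 ⟨fun b hb => ?_, fun b hb => ?_⟩
  · obtain ⟨z, hbz, hzx⟩ :=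
      ((hleft.eventually_const_lt hb).and self_mem_nhdsWithin).exists
    filter_upwards [(hslope z).eventually_const_lt hbz] with i hi
    rw [slope_comm] at hi
    exact hi.trans_le ((hf i).slope_le_of_hasDerivAt (mem_univ z) (mem_univ x) hzx (hd i))
  · obtain ⟨z, hzb, hxz⟩ :=
      ((hright.eventually_lt_const hb).and self_mem_nhdsWithin).exists
    filter_upwards [(hslope z).eventually_lt_const hzb] with i hi
    exact ((hf i).le_slope_of_hasDerivAt (mem_univ x) (mem_univ z) hxz (hd i)).trans_lt hi

section UniqueZero

variable {g : ℝ → ℝ} {A : ℝ}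

lemma pos_of_unique_zero (hg : Continuous g) (hzero : ∀ z, g z = 0 → z = A)
    (htop : Tendsto g atTop atTop) {w : ℝ} (hw : A < w) : 0 < g w := by
  by_contra! hle
  obtain ⟨z, hz, hwz⟩ := ((htop.eventually_gt_atTop 0).and (eventually_ge_atTop w)).exists
  obtain ⟨c, hc, hc0⟩ := intermediate_value_Icc hwz hg.continuousOn ⟨hle, hz.le⟩
  linarith [hzero c hc0, hc.1]

lemma neg_of_unique_zero (hg : Continuous g) (hzero : ∀ z, g z = 0 → z = A)
    (hbot : Tendsto g atBot atBot) {w : ℝ} (hw : w < A) : g w < 0 := by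
  by_contra! hle
  obtain ⟨z, hz, hzw⟩ := ((hbot.eventually_lt_atBot 0).and (eventually_le_atBot w)).exists
  obtain ⟨c, hc, hc0⟩ := intermediate_value_Icc hzw hg.continuousOn ⟨hz.le, hle⟩
  linarith [hzero c hc0, hc.2]

lemma tendsto_of_unique_zero {ι : Type*} {l : Filter ι} {G : ι → ℝ → ℝ} {a : ι → ℝ}
    (hG : ∀ i, Continuous (G i)) (hGg : ∀ z, Tendsto (fun i => G i z) l (𝓝 (g z)))
    (hzero : ∀ i z, G i z = 0 → z = a i) (hneg : ∀ w < A, g w < 0)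
    (hpos : ∀ w, A < w → 0 < g w) : Tendsto a l (𝓝 A) := by
  refine Metric.tendsto_nhds.2 fun ε hε => ?_
  filter_upwards [(hGg (A - ε / 2)).eventually_lt_const (hneg _ (by linarith)),
    (hGg (A + ε / 2)).eventually_const_lt (hpos _ (by linarith))] with i hlo hhi
  obtain ⟨c, hc, hc0⟩ := intermediate_value_Icc (by linarith : A - ε / 2 ≤ A + ε / 2)
    (hG i).continuousOn ⟨hlo.le, hhi.le⟩
  rw [← hzero i c hc0, Real.dist_eq, abs_sub_lt_iff]
  constructor <;> linarith [hc.1, hc.2]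

end UniqueZero

section TangentGap

variable {ν : Measure ℝ} {x d : ℝ}

lemma continuous_tangentGap [IsProbabilityMeasure ν] (h : Integrable id ν)
    (hc : ∫ y, y ∂ν = 0) : Continuous (tangentGap ν x d) := by
  have := continuous_putPrice h
  unfold tangentGap
  simp only [callPrice_eq_putPrice_sub h hc]
  fun_prop

lemma tendsto_tangentGap_atTop [IsFiniteMeasure ν] (h : Integrable id ν) (hd : 0 < d) :
    Tendsto (tangentGap ν x d) atTop atTop := by
  refine tendsto_atTop_mono' _ ?_ (tendsto_atTop_add_const_right _
    (putPrice ν x - d * x - ∫ y, |y| ∂ν) (tendsto_id.const_mul_atTop hd))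
  filter_upwards [eventually_ge_atTop 0] with z hz
  have := callPrice_le_integral_abs h hz
  simp only [tangentGap, id]
  linarith

lemma tendsto_tangentGap_atBot [IsProbabilityMeasure ν] (h : Integrable id ν)
    (hc : ∫ y, y ∂ν = 0) (hd : 0 ≤ d) : Tendsto (tangentGap ν x d) atBot atBot := by
  refine tendsto_atBot_mono' _ (Eventually.of_forall fun z => ?_) (tendsto_atBot_add_const_right _
    (putPrice ν x - d * x) (tendsto_id.const_mul_atBot (by linarith : 0 < d + 1)))
  have := putPrice_nonneg (ν := ν) z
  simp only [tangentGap, callPrice_eq_putPrice_sub h hc, id]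
  linarith

lemma tendsto_tangentGap {ι : Type*} {l : Filter ι} {μs : ι → Measure ℝ} {ds : ι → ℝ}
    [∀ i, IsProbabilityMeasure (μs i)] [IsProbabilityMeasure ν]
    (hints : ∀ i, Integrable id (μs i)) (hcents : ∀ i, ∫ y, y ∂μs i = 0)
    (h : Integrable id ν) (hc : ∫ y, y ∂ν = 0)
    (hP : ∀ t, Tendsto (fun i => putPrice (μs i) t) l (𝓝 (putPrice ν t)))
    (hds : Tendsto ds l (𝓝 d)) (z : ℝ) :
    Tendsto (fun i => tangentGap (μs i) x (ds i) z) l (𝓝 (tangentGap ν x d z)) := by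
  simp only [tangentGap, callPrice_eq_putPrice_sub (hints _) (hcents _),
    callPrice_eq_putPrice_sub h hc]
  exact ((hP x).add (hds.mul_const _)).sub ((hP z).sub_const z)

end TangentGap

theorem stmt_15_general (μn : ℕ → Measure ℝ) (μ : Measure ℝ)
    [∀ n, IsProbabilityMeasure (μn n)] [IsProbabilityMeasure μ]
    (hintn : ∀ n, Integrable id (μn n)) (hcentn : ∀ n, (∫ x, x ∂μn n) = 0)
    (hint : Integrable id μ) (hcent : (∫ x, x ∂μ) = 0)
    (hweak : ∀ f : BoundedContinuousFunction ℝ ℝ,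
      Tendsto (fun n => ∫ x, f x ∂μn n) atTop (nhds (∫ x, f x ∂μ)))
    (habs : Tendsto (fun n => ∫ x, |x| ∂μn n) atTop (nhds (∫ x, |x| ∂μ)))
    (x : ℝ) (hbelow : 0 < μ (Iio x))
    (Pd : ℕ → ℝ) (PD : ℝ)
    (hPdn : ∀ n, HasDerivAt (fun t => ∫ y, max (t - y) 0 ∂μn n) (Pd n) x)
    (hPD : HasDerivAt (fun t => ∫ y, max (t - y) 0 ∂μ) PD x)
    (an : ℕ → ℝ) (A : ℝ)
    (hanuniq : ∀ n, ∀ z : ℝ, (∫ y, max (x - y) 0 ∂μn n) + Pd n * (z - x)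
        = (∫ y, max (y - z) 0 ∂μn n) → z = an n)
    (hAuniq : ∀ z : ℝ, (∫ y, max (x - y) 0 ∂μ) + PD * (z - x)
        = (∫ y, max (y - z) 0 ∂μ) → z = A) :
    Tendsto an atTop (nhds A) := by
  have hP := tendsto_putPrice hintn hcentn hint hcent hweak habs
  have hPd : Tendsto Pd atTop (𝓝 PD) :=
    tendsto_of_convexOn_of_hasDerivAt (fun n => convexOn_putPrice (hintn n)) hP hPdn hPD
  have hPD_pos : 0 < PD := pos_of_hasDerivAt_putPrice hint hbelow hPD
  have hAzero : ∀ z, tangentGap μ x PD z = 0 → z = A := fun z hz =>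
    hAuniq z (sub_eq_zero.1 hz)
  have hcont := continuous_tangentGap (x := x) (d := PD) hint hcent
  exact tendsto_of_unique_zero (fun n => continuous_tangentGap (hintn n) (hcentn n))
    (tendsto_tangentGap hintn hcentn hint hcent hP hPd)
    (fun n z hz => hanuniq n z (sub_eq_zero.1 hz))
    (fun _ => neg_of_unique_zero hcont hAzero (tendsto_tangentGap_atBot hint hcent hPD_pos.le))
    (fun _ => pos_of_unique_zero hcont hAzero (tendsto_tangentGap_atTop hint hPD_pos))

/-- Convergence of Perkins boundaries: with `μ_n ⇒ μ` weakly, convergence of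
first absolute moments, `x` in (inf supp μ, 0) not an atom of μ, and
`a_n⁺(x)`, `a⁺(x)` the unique solutions `z` of the tangency equations
`P_n(x) + P_n'(x)(z-x) = C_n(z)` and `P(x) + P'(x)(z-x) = C(z)`, we have
`a_n⁺(x) → a⁺(x)`. -/
theorem stmt_15 (μn : ℕ → Measure ℝ) (μ : Measure ℝ)
    [∀ n, IsProbabilityMeasure (μn n)] [IsProbabilityMeasure μ]
    (hintn : ∀ n, Integrable id (μn n)) (hcentn : ∀ n, (∫ x, x ∂μn n) = 0)
    (hint : Integrable id μ) (hcent : (∫ x, x ∂μ) = 0)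
    (hweak : ∀ f : BoundedContinuousFunction ℝ ℝ,
      Tendsto (fun n => ∫ x, f x ∂μn n) atTop (nhds (∫ x, f x ∂μ)))
    (habs : Tendsto (fun n => ∫ x, |x| ∂μn n) atTop (nhds (∫ x, |x| ∂μ)))
    (x : ℝ) (hxneg : x < 0) (hbelow : 0 < μ (Iio x)) (hatom : μ {x} = 0)
    (Pd : ℕ → ℝ) (PD : ℝ)
    (hPdn : ∀ n, HasDerivAt (fun t => ∫ y, max (t - y) 0 ∂μn n) (Pd n) x)
    (hPD : HasDerivAt (fun t => ∫ y, max (t - y) 0 ∂μ) PD x)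
    (an : ℕ → ℝ) (A : ℝ)
    (han : ∀ n, (∫ y, max (x - y) 0 ∂μn n) + Pd n * (an n - x)
        = ∫ y, max (y - an n) 0 ∂μn n)
    (hanuniq : ∀ n, ∀ z : ℝ, (∫ y, max (x - y) 0 ∂μn n) + Pd n * (z - x)
        = (∫ y, max (y - z) 0 ∂μn n) → z = an n)
    (hA : (∫ y, max (x - y) 0 ∂μ) + PD * (A - x) = ∫ y, max (y - A) 0 ∂μ)
    (hAuniq : ∀ z : ℝ, (∫ y, max (x - y) 0 ∂μ) + PD * (z - x)
        = (∫ y, max (y - z) 0 ∂μ) → z = A) :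
    Tendsto an atTop (nhds A) :=
  stmt_15_general μn μ hintn hcentn hint hcent hweak habs x hbelow Pd PD hPdn hPD an A hanuniq
    hAuniq
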